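/- For every p ∈ [1, ∞), m, n ∈ ℕ, S ⊆ [n] and f : ℤ_{8m}^n → ℝ, ( (1/(8m)^n) Σ_{x ∈ ℤ_{8m}^n} |f(x) − T_S f(x)|^p )^{1/p} ≤ 2·( (1/(16m)^n) Σ_{ε ∈ {−1,1}^n} Σ_{x ∈ ℤ_{8m}^n} |f(x + ε) − f(x)|^p )^{1/p}. -/

import Mathlib

open Finset

/-- The smoothing operator `T_S f (x) = 2^{-n} Σ_{δ ∈ {-1,1}^n} f(x + 2δ_S)` on the
discrete torus `ℤ_{8m}^n`. -/
noncomputable def smoothT {m n : ℕ} [NeZero (8 * m)] (S : Finset (Fin n))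
    (f : (Fin n → ZMod (8 * m)) → ℝ) : (Fin n → ZMod (8 * m)) → ℝ :=
  fun x => (∑ δ : Fin n → Bool,
    f (x + fun j => if j ∈ S then 2 * (if δ j then (1 : ZMod (8 * m)) else -1) else 0)) / 2 ^ n

/-!
Pair each `δ ∈ {±1}^n` with the vector `δ'` obtained by flipping the coordinates outside `S`,
so that `δ + δ' = 2δ_S`. Then `f x - f (x + 2δ_S)` is the sum of the two first differences
`f x - f (x + δ)` and `f (x + δ) - f (x + δ + δ')`. Jensen's inequality for `|·|^p` over these
`2^{n+1}` terms, translation invariance of sums over the torus and the bijectivity of `δ ↦ δ'`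
give `Σ_x |f x - T_S f x|^p ≤ 2^p 2^{-n} Σ_ε Σ_x |f (x + ε) - f x|^p`, which is the claim
after normalizing.
-/

theorem abs_sum_div_card_rpow_le {ι : Type*} [Fintype ι] [Nonempty ι] {p : ℝ} (hp : 1 ≤ p)
    (c : ι → ℝ) : |(∑ i, c i) / Fintype.card ι| ^ p ≤ (∑ i, |c i| ^ p) / Fintype.card ι := by
  have hN : (0 : ℝ) < Fintype.card ι := by exact_mod_cast Fintype.card_pos
  have hw : ∑ _i : ι, (Fintype.card ι : ℝ)⁻¹ = 1 := by
    simp [Finset.card_univ, hN.ne']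
  calc |(∑ i, c i) / Fintype.card ι| ^ p
      ≤ (∑ i, (Fintype.card ι : ℝ)⁻¹ * |c i|) ^ p := by
        gcongr
        rw [abs_div, Nat.abs_cast, div_eq_inv_mul, ← mul_sum]
        gcongr
        exact abs_sum_le_sum_abs _ _
    _ ≤ ∑ i, (Fintype.card ι : ℝ)⁻¹ * |c i| ^ p :=
        Real.rpow_arith_mean_le_arith_mean_rpow _ _ _ (fun _ _ => by positivity) hw
          (fun _ _ => abs_nonneg _) hp
    _ = (∑ i, |c i| ^ p) / Fintype.card ι := by rw [← mul_sum, inv_mul_eq_div]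

section Average

variable {G ι : Type*} [AddCommGroup G] [Fintype G] [Fintype ι] [Nonempty ι] {p : ℝ}

theorem sum_abs_sub_average_rpow_le (hp : 1 ≤ p) (f : G → ℝ) (u : ι → G) (σ : Equiv.Perm ι) :
    ∑ x, |f x - (∑ i, f (x + (u i + u (σ i)))) / Fintype.card ι| ^ p ≤
      2 ^ p / Fintype.card ι * ∑ i, ∑ x, |f (x + u i) - f x| ^ p := by
  have hN : (0 : ℝ) < Fintype.card ι := by exact_mod_cast Fintype.card_pos
  set D : G → ℝ := fun w => ∑ x, |f (x + w) - f x| ^ p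
  let c : G → ι ⊕ ι → ℝ := fun x =>
    Sum.elim (fun i => f x - f (x + u i)) (fun i => f (x + u i) - f (x + u i + u (σ i)))
  have hcard : (Fintype.card (ι ⊕ ι) : ℝ) = 2 * Fintype.card ι := by
    rw [Fintype.card_sum]; push_cast; ring
  have hsplit : ∀ x, f x - (∑ i, f (x + (u i + u (σ i)))) / Fintype.card ι =
      2 * ((∑ k, c x k) / Fintype.card (ι ⊕ ι)) := by
    intro x
    simp only [c, Fintype.sum_sum_type, Sum.elim_inl, Sum.elim_inr, ← sum_add_distrib, hcard,
      sub_add_sub_cancel, add_assoc]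
    rw [sum_sub_distrib, sum_const, card_univ, nsmul_eq_mul]
    field_simp
  have hpoint : ∀ x, |f x - (∑ i, f (x + (u i + u (σ i)))) / Fintype.card ι| ^ p ≤
      2 ^ p * ((∑ k, |c x k| ^ p) / (2 * Fintype.card ι)) := by
    intro x
    rw [hsplit, abs_mul, abs_two, Real.mul_rpow zero_le_two (abs_nonneg _), ← hcard]
    gcongr
    exact abs_sum_div_card_rpow_le hp (c x)
  have hfirst : ∑ x, ∑ i, |f x - f (x + u i)| ^ p = ∑ i, D (u i) := by
    rw [sum_comm]
    simp only [D, abs_sub_comm]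
  have hsecond : ∑ x, ∑ i, |f (x + u i) - f (x + u i + u (σ i))| ^ p = ∑ i, D (u i) := by
    rw [sum_comm, ← Equiv.sum_comp σ (fun i => D (u i))]
    refine sum_congr rfl fun i _ => Fintype.sum_equiv (Equiv.addRight (u i)) _ _ fun x => by
      rw [abs_sub_comm]; rfl
  calc _ ≤ ∑ x, 2 ^ p * ((∑ k, |c x k| ^ p) / (2 * Fintype.card ι)) :=
        sum_le_sum fun x _ => hpoint x
    _ = 2 ^ p / Fintype.card ι * ∑ i, D (u i) := by
      simp only [c, Fintype.sum_sum_type, Sum.elim_inl, Sum.elim_inr, ← mul_sum, ← sum_div,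
        sum_add_distrib, hfirst, hsecond]
      field_simp
      ring

end Average

section SignVectors

variable {ι : Type*}

def signVector {R : Type*} [One R] [Neg R] (ε : ι → Bool) : ι → R :=
  fun j => if ε j then 1 else -1

variable [DecidableEq ι] (S : Finset ι)

def flipOutside (δ : ι → Bool) : ι → Bool :=
  fun j => if j ∈ S then δ j else !δ j

theorem flipOutside_involutive : Function.Involutive (flipOutside S) := by
  intro δ
  funext j
  by_cases h : j ∈ S <;> simp [flipOutside, h]

theorem signVector_add_signVector_flipOutside {R : Type*} [Ring R] (δ : ι → Bool) :
    signVector δ + signVector (flipOutside S δ) =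
      fun j => if j ∈ S then 2 * (if δ j then (1 : R) else -1) else 0 := by
  funext j
  by_cases h : j ∈ S <;> by_cases hδ : δ j <;> simp [signVector, flipOutside, h, hδ] <;> norm_num

end SignVectors

theorem smoothT_eq_average {m n : ℕ} [NeZero (8 * m)] (S : Finset (Fin n))
    (f : (Fin n → ZMod (8 * m)) → ℝ) (x : Fin n → ZMod (8 * m)) :
    smoothT S f x = (∑ δ : Fin n → Bool,
      f (x + (signVector δ + signVector (flipOutside S δ)))) / 2 ^ n := by
  simp only [smoothT, signVector_add_signVector_flipOutside]

/-- **Lemma 2.1**: for every `p ∈ [1,∞)`, `m, n ∈ ℕ`, `S ⊆ [n]` and `f : ℤ_{8m}^n → ℝ`,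
`((1/(8m)^n) Σ_x |f(x) - T_S f(x)|^p)^{1/p}
  ≤ 2 ((1/(16m)^n) Σ_ε Σ_x |f(x+ε) - f(x)|^p)^{1/p}`. -/
theorem smoothT_close_to_identity (p : ℝ) (hp : 1 ≤ p) (m n : ℕ) [NeZero (8 * m)]
    (S : Finset (Fin n)) (f : (Fin n → ZMod (8 * m)) → ℝ) :
    ((∑ x : Fin n → ZMod (8 * m), |f x - smoothT S f x| ^ p) / (8 * m : ℝ) ^ n) ^ (1 / p) ≤
      2 * ((∑ ε : Fin n → Bool, ∑ x : Fin n → ZMod (8 * m),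
          |f (x + fun j => if ε j then (1 : ZMod (8 * m)) else -1) - f x| ^ p) /
        (16 * m : ℝ) ^ n) ^ (1 / p) := by
  have hp0 : 0 < p := by linarith
  have hm : (0 : ℝ) < 8 * m := by exact_mod_cast Nat.pos_of_ne_zero (NeZero.ne (8 * m))
  set A := ∑ x : Fin n → ZMod (8 * m), |f x - smoothT S f x| ^ p
  set E := ∑ ε : Fin n → Bool, ∑ x : Fin n → ZMod (8 * m),
    |f (x + fun j => if ε j then (1 : ZMod (8 * m)) else -1) - f x| ^ p
  have hA : A ≤ 2 ^ p / 2 ^ n * E := by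
    have key := sum_abs_sub_average_rpow_le hp f signVector (flipOutside_involutive S).toPerm
    simp only [← smoothT_eq_average, Fintype.card_fun, Fintype.card_bool, Fintype.card_fin,
      Nat.cast_pow, Nat.cast_ofNat, Function.Involutive.coe_toPerm] at key
    exact key
  have hscaled : A / (8 * m) ^ n ≤ 2 ^ p * (E / (16 * m) ^ n) := by
    rw [div_le_iff₀ (by positivity), show (16 * m : ℝ) = 2 * (8 * m) by ring, mul_pow]
    exact hA.trans_eq (by field_simp)
  calc (A / (8 * m) ^ n) ^ (1 / p) ≤ (2 ^ p * (E / (16 * m) ^ n)) ^ (1 / p) := by gcongr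
    _ = 2 * (E / (16 * m) ^ n) ^ (1 / p) := by
      rw [Real.mul_rpow (by positivity) (by positivity), ← Real.rpow_mul zero_le_two,
        mul_one_div_cancel hp0.ne', Real.rpow_one]
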